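/- arXiv:2211.07310 — 5 statements merged into one kernel-verified Lean document; each statement's English description precedes it below -/
import Mathlib

section
/- For any n ≥ 2, any nonnegative reals c_1,…,c_n, and any symmetric nonnegative kernel φ_{i,j}, the sum over i of the right-hand sides of the truncated non-conservative Safronov-Dubovski system equals −∑_{i=1}^{n−1} ∑_{j=i}^{n} φ_{i,j} c_i c_j, which is ≤ 0. In particular, the total number of particles μ_0(t) = ∑_{i=1}^{n} c_i(t) is non-increasing along solutions. -/
open Finset

/-- Right-hand sides of the truncated non-conservative Safronov–Dubovski system. -/
noncomputable def Cn (n : ℕ) (φ : ℕ → ℕ → ℝ) (c : ℕ → ℝ) (i : ℕ) : ℝ :=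
  if i = 1 then -(φ 1 1 * c 1 ^ 2) - c 1 * ∑ j ∈ Icc 1 n, φ 1 j * c j
  else if i = n then c (n - 1) * ∑ j ∈ Icc 1 (n - 1), (j : ℝ) * φ (n - 1) j * c j
  else c (i - 1) * ∑ j ∈ Icc 1 (i - 1), (j : ℝ) * φ (i - 1) j * c j
    - c i * ∑ j ∈ Icc 1 i, (j : ℝ) * φ i j * c j
    - c i * ∑ j ∈ Icc i n, φ i j * c j

/-!
Write `F i = c i ∑_{j ≤ i} j φ i j c j` for the flux from size `i` to size `i + 1` and
`L i = c i ∑_{j = i}^{n} φ i j c j` for the loss at size `i`. Every equation with `i < n` reads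
`dc_i/dt = F (i - 1) - F i - L i` (with `F 0 = 0`), and the last one `dc_n/dt = F (n - 1)`. Summing,
the fluxes telescope away and only `-∑_{i < n} L i ≤ 0` survives.
-/

theorem Finset.sum_Icc_one_sub_pred {M : Type*} [AddCommGroup M] (f : ℕ → M) (m : ℕ) :
    ∑ i ∈ Icc 1 m, (f (i - 1) - f i) = f 0 - f m := by
  induction m with
  | zero => simp
  | succ m ih =>
    rw [sum_Icc_succ_top (by omega), ih, Nat.add_sub_cancel]
    abel

namespace Cn

variable (n : ℕ) (φ : ℕ → ℕ → ℝ) (c : ℕ → ℝ)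

noncomputable def flux (i : ℕ) : ℝ := c i * ∑ j ∈ Icc 1 i, (j : ℝ) * φ i j * c j

noncomputable def loss (i : ℕ) : ℝ := c i * ∑ j ∈ Icc i n, φ i j * c j

@[simp]
theorem flux_zero : flux φ c 0 = 0 := by
  simp [flux]

theorem eq_flux_sub_flux_sub_loss {i : ℕ} (hi : 1 ≤ i) (hin : i < n) :
    Cn n φ c i = flux φ c (i - 1) - flux φ c i - loss n φ c i := by
  rcases eq_or_ne i 1 with rfl | hi1
  · simp [Cn, flux, loss, sq, mul_left_comm]
  · rw [Cn, if_neg hi1, if_neg hin.ne, flux, flux, loss]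

theorem self_eq_flux (hn : n ≠ 1) : Cn n φ c n = flux φ c (n - 1) := by
  rw [Cn, if_neg hn, if_pos rfl, flux]

theorem sum_eq_neg_sum_loss (hn : 2 ≤ n) :
    ∑ i ∈ Icc 1 n, Cn n φ c i = -∑ i ∈ Icc 1 (n - 1), loss n φ c i := by
  obtain ⟨m, rfl⟩ : ∃ m, n = m + 1 := ⟨n - 1, by omega⟩
  have hbulk : ∑ i ∈ Icc 1 m, Cn (m + 1) φ c i
      = ∑ i ∈ Icc 1 m, (flux φ c (i - 1) - flux φ c i) - ∑ i ∈ Icc 1 m, loss (m + 1) φ c i := by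
    rw [← sum_sub_distrib]
    refine sum_congr rfl fun i hi => ?_
    rw [mem_Icc] at hi
    exact eq_flux_sub_flux_sub_loss _ _ _ hi.1 (by omega)
  rw [sum_Icc_succ_top (by omega), hbulk, sum_Icc_one_sub_pred, self_eq_flux _ _ _ (by omega),
    flux_zero, Nat.add_sub_cancel]
  ring

theorem sum_loss_eq (m : ℕ) :
    ∑ i ∈ Icc 1 m, loss n φ c i = ∑ i ∈ Icc 1 m, ∑ j ∈ Icc i n, φ i j * c i * c j := by
  refine sum_congr rfl fun i _ => ?_
  rw [loss, mul_sum]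
  exact sum_congr rfl fun j _ => by ring

theorem sum_nonpos (hn : 2 ≤ n) (hφ : ∀ i j, 0 ≤ φ i j) (hc : ∀ i, 0 ≤ c i) :
    ∑ i ∈ Icc 1 n, Cn n φ c i ≤ 0 := by
  rw [sum_eq_neg_sum_loss _ _ _ hn, neg_nonpos]
  exact sum_nonneg fun i _ => mul_nonneg (hc i) <|
    sum_nonneg fun j _ => mul_nonneg (hφ i j) (hc j)

end Cn

theorem stmt2_general (n : ℕ) (hn : 2 ≤ n) (φ : ℕ → ℕ → ℝ)
    (hφnn : ∀ i j, 0 ≤ φ i j) :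
    (∀ c : ℕ → ℝ, (∀ i, 0 ≤ c i) →
      ∑ i ∈ Icc 1 n, Cn n φ c i
        = -∑ i ∈ Icc 1 (n - 1), ∑ j ∈ Icc i n, φ i j * c i * c j ∧
      ∑ i ∈ Icc 1 n, Cn n φ c i ≤ 0) ∧
    (∀ c : ℕ → ℝ → ℝ, (∀ i t, 0 ≤ c i t) →
      (∀ i ∈ Icc 1 n, ∀ t : ℝ, HasDerivAt (c i) (Cn n φ (fun k => c k t) i) t) →
      AntitoneOn (fun t => ∑ i ∈ Icc 1 n, c i t) (Set.Ici 0)) := by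
  refine ⟨fun c hc => ⟨?_, Cn.sum_nonpos n φ c hn hφnn hc⟩, fun c hc hderiv => ?_⟩
  · rw [Cn.sum_eq_neg_sum_loss n φ c hn, Cn.sum_loss_eq]
  · refine (antitone_of_hasDerivAt_nonpos (fun t => HasDerivAt.fun_sum fun i hi => hderiv i hi t)
      fun t => Cn.sum_nonpos n φ _ hn hφnn fun k => hc k t).antitoneOn _

/-- The sum of the right-hand sides equals minus the dissipation term, is ≤ 0,
    and consequently the number of particles is non-increasing along solutions. -/
theorem stmt2 (n : ℕ) (hn : 2 ≤ n) (φ : ℕ → ℕ → ℝ)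
    (hφnn : ∀ i j, 0 ≤ φ i j) (hφsym : ∀ i j, φ i j = φ j i) :
    (∀ c : ℕ → ℝ, (∀ i, 0 ≤ c i) →
      ∑ i ∈ Icc 1 n, Cn n φ c i
        = -∑ i ∈ Icc 1 (n - 1), ∑ j ∈ Icc i n, φ i j * c i * c j ∧
      ∑ i ∈ Icc 1 n, Cn n φ c i ≤ 0) ∧
    (∀ c : ℕ → ℝ → ℝ, (∀ i t, 0 ≤ c i t) →
      (∀ i ∈ Icc 1 n, ∀ t : ℝ, HasDerivAt (c i) (Cn n φ (fun k => c k t) i) t) →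
      AntitoneOn (fun t => ∑ i ∈ Icc 1 n, c i t) (Set.Ici 0)) :=
  stmt2_general n hn φ hφnn
end

section
/- For any n ≥ 2, any nonnegative reals c_1,…,c_n, and any symmetric nonnegative kernel φ_{i,j}, the weighted sum ∑_{i=1}^{n} i·C_i^n(c) of the right-hand sides of the truncated non-conservative Safronov-Dubovski system equals −∑_{j=1}^{n−1} j φ_{n,j} c_n c_j ≤ 0. Consequently, along any solution, the first moment (mass) μ_1(t) = ∑_{i=1}^{n} i c_i(t) satisfies μ_1(t) ≤ μ_1(0) for all t ≥ 0. -/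
open Finset

/-!
Let `B_k = c_k ∑_{j ≤ k} j φ_{k,j} c_j` (`growthFlux`) be the flux from size `k` to size `k + 1`
and `D_k = c_k ∑_{k ≤ j ≤ n} φ_{k,j} c_j` (`collisionLoss`) the loss of size `k` by collisions.
Then `C_i = B_{i-1} - B_i - D_i`, with `B_0 = 0` and no outflow at `i = n`, so summation by parts
gives `∑ w_i C_i = ∑_{k<n} ((w_{k+1} - w_k) B_k - w_k D_k)`. For `w_i = i` this is
`∑_{k<n} (B_k - k D_k)`; after splitting off `j = n` in `D_k` and swapping the double sum, symmetry
of `φ` turns `∑_{k ≤ j < n} k φ_{k,j} c_k c_j` into `∑_j B_j`, leaving only the collisions with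
size `n`.
-/

namespace SafronovDubovski

noncomputable def growthFlux (φ : ℕ → ℕ → ℝ) (c : ℕ → ℝ) (i : ℕ) : ℝ :=
  c i * ∑ j ∈ Icc 1 i, (j : ℝ) * φ i j * c j

noncomputable def collisionLoss (n : ℕ) (φ : ℕ → ℕ → ℝ) (c : ℕ → ℝ) (i : ℕ) : ℝ :=
  c i * ∑ j ∈ Icc i n, φ i j * c j

section Algebra

variable {n : ℕ} (φ : ℕ → ℕ → ℝ) (c : ℕ → ℝ)

theorem Cn_eq_ite {i : ℕ} (hn : 2 ≤ n) (hi : i ∈ Icc 1 n) :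
    Cn n φ c i = (if i ∈ Icc 2 n then growthFlux φ c (i - 1) else 0)
      - (if i ∈ Icc 1 (n - 1) then growthFlux φ c i + collisionLoss n φ c i else 0) := by
  rw [mem_Icc] at hi
  simp only [Cn, growthFlux, collisionLoss, mem_Icc]
  rcases eq_or_ne i 1 with rfl | hi1
  · simp only [↓reduceIte, Nat.not_ofNat_le_one, false_and, le_refl, show 1 ≤ n - 1 by omega,
      and_self, Icc_self, sum_singleton, Nat.cast_one, one_mul, zero_sub]
    ring
  rcases eq_or_ne i n with rfl | hin
  · simp [hi1, show ¬ i ≤ i - 1 by omega, show 2 ≤ i by omega]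
  · simp only [hi1, hin, ↓reduceIte, show 2 ≤ i by omega, show i ≤ n - 1 by omega, hi.1, hi.2,
      and_self]
    ring

theorem sum_mul_Cn (hn : 2 ≤ n) (w : ℕ → ℝ) :
    ∑ i ∈ Icc 1 n, w i * Cn n φ c i = ∑ k ∈ Icc 1 (n - 1),
      ((w (k + 1) - w k) * growthFlux φ c k - w k * collisionLoss n φ c k) := by
  obtain ⟨m, rfl⟩ : ∃ m, n = m + 1 := ⟨n - 1, by omega⟩
  have hshift : ∑ i ∈ Icc 2 (m + 1), w i * growthFlux φ c (i - 1)
      = ∑ k ∈ Icc 1 m, w (k + 1) * growthFlux φ c k := by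
    rw [← map_add_right_Icc 1 m 1, sum_map]
    rfl
  rw [sum_congr rfl fun i hi => by rw [Cn_eq_ite φ c hn hi]]
  simp only [mul_sub, mul_ite, mul_zero, sum_sub_distrib, sum_ite_mem,
    inter_eq_right.mpr (Icc_subset_Icc_left one_le_two),
    inter_eq_right.mpr (Icc_subset_Icc_right (Nat.sub_le _ 1)), hshift]
  simp only [Nat.add_sub_cancel, sub_mul, mul_add, sum_add_distrib, sum_sub_distrib]
  ring

theorem sum_mul_collisionLoss (hφsym : ∀ i j, φ i j = φ j i) (m : ℕ) :
    ∑ k ∈ Icc 1 m, (k : ℝ) * collisionLoss (m + 1) φ c k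
      = ∑ k ∈ Icc 1 m, growthFlux φ c k
        + ∑ j ∈ Icc 1 m, (j : ℝ) * φ (m + 1) j * c (m + 1) * c j := by
  have hsplit : ∀ k ∈ Icc 1 m, (k : ℝ) * collisionLoss (m + 1) φ c k
      = ∑ j ∈ Icc k m, (k : ℝ) * φ k j * c k * c j + (k : ℝ) * φ (m + 1) k * c (m + 1) * c k := by
    intro k hk
    rw [collisionLoss, sum_Icc_succ_top (by rw [mem_Icc] at hk; omega), hφsym k (m + 1),
      mul_add, mul_add, mul_sum, mul_sum]
    congr 1
    · exact sum_congr rfl fun j _ => by ring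
    · ring
  have hswap : ∑ k ∈ Icc 1 m, ∑ j ∈ Icc k m, (k : ℝ) * φ k j * c k * c j
      = ∑ j ∈ Icc 1 m, growthFlux φ c j := by
    rw [sum_comm' (t' := Icc 1 m) (s' := fun j => Icc 1 j)
      (by intro k j; simp only [mem_Icc]; omega)]
    refine sum_congr rfl fun j _ => ?_
    rw [growthFlux, mul_sum]
    refine sum_congr rfl fun k _ => ?_
    rw [hφsym k j]
    ring
  rw [sum_congr rfl hsplit, sum_add_distrib, hswap]

theorem sum_mul_Cn_eq_neg (hn : 2 ≤ n) (hφsym : ∀ i j, φ i j = φ j i) :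
    ∑ i ∈ Icc 1 n, (i : ℝ) * Cn n φ c i
      = -∑ j ∈ Icc 1 (n - 1), (j : ℝ) * φ n j * c n * c j := by
  obtain ⟨m, rfl⟩ : ∃ m, n = m + 1 := ⟨n - 1, by omega⟩
  simp only [sum_mul_Cn φ c hn, Nat.cast_add, Nat.cast_one, add_sub_cancel_left, one_mul,
    sum_sub_distrib, sum_mul_collisionLoss φ c hφsym, Nat.add_sub_cancel]
  ring

theorem sum_mul_Cn_nonpos (hn : 2 ≤ n) (hφnn : ∀ i j, 0 ≤ φ i j)
    (hφsym : ∀ i j, φ i j = φ j i) (hc : ∀ i, 0 ≤ c i) :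
    ∑ i ∈ Icc 1 n, (i : ℝ) * Cn n φ c i ≤ 0 := by
  rw [sum_mul_Cn_eq_neg φ c hn hφsym, neg_nonpos]
  exact sum_nonneg fun j _ => by have := hφnn n j; have := hc n; have := hc j; positivity

end Algebra

theorem antitone_firstMoment {n : ℕ} (hn : 2 ≤ n) {φ : ℕ → ℕ → ℝ} (hφnn : ∀ i j, 0 ≤ φ i j)
    (hφsym : ∀ i j, φ i j = φ j i) {c : ℕ → ℝ → ℝ} (hc : ∀ i t, 0 ≤ c i t)
    (hderiv : ∀ i ∈ Icc 1 n, ∀ t, HasDerivAt (c i) (Cn n φ (fun k => c k t) i) t) :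
    Antitone fun t => ∑ i ∈ Icc 1 n, (i : ℝ) * c i t :=
  antitone_of_hasDerivAt_nonpos
    (fun t => HasDerivAt.fun_sum fun i hi => (hderiv i hi t).const_mul _)
    fun t => sum_mul_Cn_nonpos φ _ hn hφnn hφsym fun i => hc i t

end SafronovDubovski

open SafronovDubovski in
/-- The weighted sum `∑ i·C_i^n(c)` equals `−∑_{j<n} j φ_{n,j} c_n c_j ≤ 0`, and hence
    the first moment of a solution is non-increasing: μ₁(t) ≤ μ₁(0) for t ≥ 0. -/
theorem stmt3 (n : ℕ) (hn : 2 ≤ n) (φ : ℕ → ℕ → ℝ)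
    (hφnn : ∀ i j, 0 ≤ φ i j) (hφsym : ∀ i j, φ i j = φ j i) :
    (∀ c : ℕ → ℝ, (∀ i, 0 ≤ c i) →
      ∑ i ∈ Icc 1 n, (i : ℝ) * Cn n φ c i
        = -∑ j ∈ Icc 1 (n - 1), (j : ℝ) * φ n j * c n * c j ∧
      ∑ i ∈ Icc 1 n, (i : ℝ) * Cn n φ c i ≤ 0) ∧
    (∀ c : ℕ → ℝ → ℝ, (∀ i t, 0 ≤ c i t) →
      (∀ i ∈ Icc 1 n, ∀ t : ℝ, HasDerivAt (c i) (Cn n φ (fun k => c k t) i) t) →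
      ∀ t : ℝ, 0 ≤ t →
        ∑ i ∈ Icc 1 n, (i : ℝ) * c i t ≤ ∑ i ∈ Icc 1 n, (i : ℝ) * c i 0) :=
  ⟨fun c hc => ⟨sum_mul_Cn_eq_neg φ c hn hφsym, sum_mul_Cn_nonpos φ c hn hφnn hφsym hc⟩,
    fun _ hc hderiv _ ht => antitone_firstMoment hn hφnn hφsym hc hderiv ht⟩
end

section
/- Let φ_{i,j} ≤ (i+j)/min{i,j} for all i,j, and let c^n = (c_i^n) be a nonnegative solution of the truncated non-conservative Safronov-Dubovski system on [0,T] with ∑ c_i^n(t) ≤ μ_0(0) and ∑ j c_j^n(t) ≤ ‖c_0‖ for all t. Then for each fixed i with 2 ≤ i ≤ n−1, the total variation of c_i^n on [0,T] is bounded: ∫_0^T |dc_i^n/dt| dt ≤ 6 μ_0(0) ‖c_0‖ T. -/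
open Finset

lemma sum_kernel_bound (k n : ℕ) (hk : 1 ≤ k) (hkn : k ≤ n)
    (φ : ℕ → ℕ → ℝ) (hφnn : ∀ i j, 0 ≤ φ i j)
    (hφ : ∀ i j : ℕ, 1 ≤ i → 1 ≤ j → φ i j ≤ ((i : ℝ) + j) / (min i j : ℕ))
    (a : ℕ → ℝ) (hann : ∀ j, 0 ≤ a j)
    (N M : ℝ) (hN : ∑ j ∈ Icc 1 n, a j ≤ N) (hM : ∑ j ∈ Icc 1 n, (j : ℝ) * a j ≤ M) :
    a k * ∑ j ∈ Icc 1 k, (j : ℝ) * φ k j * a j ≤ 2 * N * M := by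
  have hkmem : k ∈ Icc 1 n := by simp [hk, hkn]
  have hNnn : 0 ≤ N := le_trans (Finset.sum_nonneg fun j _ => hann j) hN
  have hMnn : 0 ≤ M :=
    le_trans (Finset.sum_nonneg fun j _ => mul_nonneg (by positivity) (hann j)) hM
  have hak : a k ≤ N :=
    le_trans (Finset.single_le_sum (fun j _ => hann j) hkmem) hN
  have hkak : (k : ℝ) * a k ≤ M :=
    le_trans (Finset.single_le_sum
      (fun j _ => mul_nonneg (by positivity) (hann j)) hkmem) hM
  have hsubset : Icc 1 k ⊆ Icc 1 n := Icc_subset_Icc_right hkn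
  have hsumN : ∑ j ∈ Icc 1 k, a j ≤ N :=
    le_trans (Finset.sum_le_sum_of_subset_of_nonneg hsubset fun j _ _ => hann j) hN
  have hsumM : ∑ j ∈ Icc 1 k, (j : ℝ) * a j ≤ M :=
    le_trans (Finset.sum_le_sum_of_subset_of_nonneg hsubset
      fun j _ _ => mul_nonneg (by positivity) (hann j)) hM
  have hS : ∑ j ∈ Icc 1 k, (j : ℝ) * φ k j * a j ≤ (k : ℝ) * N + M := by
    calc ∑ j ∈ Icc 1 k, (j : ℝ) * φ k j * a j
        ≤ ∑ j ∈ Icc 1 k, ((k : ℝ) + j) * a j := by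
          apply Finset.sum_le_sum
          intro j hj
          rw [Finset.mem_Icc] at hj
          have hj1 : 1 ≤ j := hj.1
          have hmin : min k j = j := min_eq_right hj.2
          have hφkj := hφ k j hk hj1
          rw [hmin] at hφkj
          have hj0 : (0 : ℝ) < (j : ℝ) := by exact_mod_cast hj1
          have h1 : (j : ℝ) * φ k j ≤ (k : ℝ) + j := by
            calc (j : ℝ) * φ k j ≤ (j : ℝ) * (((k : ℝ) + j) / j) :=
                  mul_le_mul_of_nonneg_left hφkj hj0.le
              _ = (k : ℝ) + j := by field_simp
          exact mul_le_mul_of_nonneg_right h1 (hann j)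
      _ = (k : ℝ) * (∑ j ∈ Icc 1 k, a j) + ∑ j ∈ Icc 1 k, (j : ℝ) * a j := by
          rw [Finset.mul_sum, ← Finset.sum_add_distrib]
          apply Finset.sum_congr rfl
          intro j _; ring
      _ ≤ (k : ℝ) * N + M :=
          add_le_add (mul_le_mul_of_nonneg_left hsumN (by positivity)) hsumM
  calc a k * ∑ j ∈ Icc 1 k, (j : ℝ) * φ k j * a j
      ≤ a k * ((k : ℝ) * N + M) := mul_le_mul_of_nonneg_left hS (hann k)
    _ = ((k : ℝ) * a k) * N + a k * M := by ring
    _ ≤ M * N + N * M :=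
        add_le_add (mul_le_mul_of_nonneg_right hkak hNnn)
          (mul_le_mul_of_nonneg_right hak hMnn)
    _ = 2 * N * M := by ring

lemma tail_kernel_bound (i n : ℕ) (hi : 2 ≤ i) (hin : i ≤ n)
    (φ : ℕ → ℕ → ℝ) (hφnn : ∀ i j, 0 ≤ φ i j)
    (hφ : ∀ i j : ℕ, 1 ≤ i → 1 ≤ j → φ i j ≤ ((i : ℝ) + j) / (min i j : ℕ))
    (a : ℕ → ℝ) (hann : ∀ j, 0 ≤ a j)
    (N M : ℝ) (hN : ∑ j ∈ Icc 1 n, a j ≤ N) (hM : ∑ j ∈ Icc 1 n, (j : ℝ) * a j ≤ M) :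
    a i * ∑ j ∈ Icc i n, φ i j * a j ≤ N * M := by
  have hi1 : 1 ≤ i := le_trans (by norm_num) hi
  have himem : i ∈ Icc 1 n := by simp [hi1, hin]
  have hNnn : 0 ≤ N := le_trans (Finset.sum_nonneg fun j _ => hann j) hN
  have hMnn : 0 ≤ M :=
    le_trans (Finset.sum_nonneg fun j _ => mul_nonneg (by positivity) (hann j)) hM
  have hai : a i ≤ N :=
    le_trans (Finset.single_le_sum (fun j _ => hann j) himem) hN
  have hsubset : Icc i n ⊆ Icc 1 n := Icc_subset_Icc_left hi1
  have hsumM : ∑ j ∈ Icc i n, (j : ℝ) * a j ≤ M :=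
    le_trans (Finset.sum_le_sum_of_subset_of_nonneg hsubset
      fun j _ _ => mul_nonneg (by positivity) (hann j)) hM
  have hi0 : (0 : ℝ) < (i : ℝ) := by exact_mod_cast hi1
  have hS : ∑ j ∈ Icc i n, φ i j * a j ≤ (2 / i) * M := by
    calc ∑ j ∈ Icc i n, φ i j * a j
        ≤ ∑ j ∈ Icc i n, (2 / (i : ℝ)) * ((j : ℝ) * a j) := by
          apply Finset.sum_le_sum
          intro j hj
          rw [Finset.mem_Icc] at hj
          have hij : i ≤ j := hj.1
          have hj1 : 1 ≤ j := le_trans hi1 hij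
          have hmin : min i j = i := min_eq_left hij
          have hφij := hφ i j hi1 hj1
          rw [hmin] at hφij
          have hijr : (i : ℝ) ≤ (j : ℝ) := by exact_mod_cast hij
          have h1 : φ i j ≤ 2 / (i : ℝ) * j := by
            calc φ i j ≤ ((i : ℝ) + j) / i := hφij
              _ ≤ (2 * (j : ℝ)) / i := by
                  gcongr
                  linarith
              _ = 2 / (i : ℝ) * j := by ring
          calc φ i j * a j ≤ (2 / (i : ℝ) * j) * a j :=
                mul_le_mul_of_nonneg_right h1 (hann j)
            _ = (2 / (i : ℝ)) * ((j : ℝ) * a j) := by ring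
      _ = (2 / (i : ℝ)) * ∑ j ∈ Icc i n, (j : ℝ) * a j := by rw [Finset.mul_sum]
      _ ≤ (2 / i) * M := mul_le_mul_of_nonneg_left hsumM (by positivity)
  have h2i : (2 / (i : ℝ)) ≤ 1 := by
    rw [div_le_one hi0]
    exact_mod_cast hi
  have hSM : (2 / (i : ℝ)) * M ≤ M := by nlinarith
  have hSnn : 0 ≤ ∑ j ∈ Icc i n, φ i j * a j :=
    Finset.sum_nonneg fun j _ => mul_nonneg (hφnn i j) (hann j)
  calc a i * ∑ j ∈ Icc i n, φ i j * a j
      ≤ N * M := mul_le_mul hai (le_trans hS hSM) hSnn hNnn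

lemma cn_bound (n i : ℕ) (hn : 2 ≤ n) (h2i : 2 ≤ i) (hin : i ≤ n - 1)
    (φ : ℕ → ℕ → ℝ) (hφnn : ∀ i j, 0 ≤ φ i j)
    (hφ : ∀ i j : ℕ, 1 ≤ i → 1 ≤ j → φ i j ≤ ((i : ℝ) + j) / (min i j : ℕ))
    (a : ℕ → ℝ) (hann : ∀ j, 0 ≤ a j)
    (N M : ℝ) (hN : ∑ j ∈ Icc 1 n, a j ≤ N) (hM : ∑ j ∈ Icc 1 n, (j : ℝ) * a j ≤ M) :
    |Cn n φ a i| ≤ 6 * N * M := by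
  have hNnn : 0 ≤ N := le_trans (Finset.sum_nonneg fun j _ => hann j) hN
  have hMnn : 0 ≤ M :=
    le_trans (Finset.sum_nonneg fun j _ => mul_nonneg (by positivity) (hann j)) hM
  have hne1 : i ≠ 1 := by omega
  have hnen : i ≠ n := by omega
  have him1 : 1 ≤ i - 1 := by omega
  have him1n : i - 1 ≤ n := by omega
  have hinn : i ≤ n := by omega
  rw [Cn, if_neg hne1, if_neg hnen]
  set T1 := a (i - 1) * ∑ j ∈ Icc 1 (i - 1), (j : ℝ) * φ (i - 1) j * a j with hT1
  set T2 := a i * ∑ j ∈ Icc 1 i, (j : ℝ) * φ i j * a j with hT2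
  set T3 := a i * ∑ j ∈ Icc i n, φ i j * a j with hT3
  have hT1nn : 0 ≤ T1 := mul_nonneg (hann _)
    (Finset.sum_nonneg fun j _ => mul_nonneg (mul_nonneg (by positivity) (hφnn _ j)) (hann j))
  have hT2nn : 0 ≤ T2 := mul_nonneg (hann _)
    (Finset.sum_nonneg fun j _ => mul_nonneg (mul_nonneg (by positivity) (hφnn _ j)) (hann j))
  have hT3nn : 0 ≤ T3 := mul_nonneg (hann _)
    (Finset.sum_nonneg fun j _ => mul_nonneg (hφnn _ j) (hann j))
  have hb1 : T1 ≤ 2 * N * M :=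
    sum_kernel_bound (i - 1) n him1 him1n φ hφnn hφ a hann N M hN hM
  have hb2 : T2 ≤ 2 * N * M :=
    sum_kernel_bound i n (by omega) hinn φ hφnn hφ a hann N M hN hM
  have hb3 : T3 ≤ N * M :=
    tail_kernel_bound i n h2i hinn φ hφnn hφ a hann N M hN hM
  have : |T1 - T2 - T3| ≤ T1 + T2 + T3 := by
    rw [abs_le]
    constructor <;> nlinarith
  nlinarith [this]

/-- Lemma 2.3, kernel `φ_{i,j} ≤ (i+j)/min{i,j}`: total-variation bound
    `∫₀ᵀ |dcᵢⁿ/dt| dt ≤ 6 μ₀(0) ‖c₀‖ T` for `2 ≤ i ≤ n−1`. -/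
theorem stmt6 (n : ℕ) (hn : 2 ≤ n) (T : ℝ) (hT : 0 < T)
    (φ : ℕ → ℕ → ℝ) (hφnn : ∀ i j, 0 ≤ φ i j) (hφsym : ∀ i j, φ i j = φ j i)
    (hφ : ∀ i j : ℕ, 1 ≤ i → 1 ≤ j → φ i j ≤ ((i : ℝ) + j) / (min i j : ℕ))
    (N M : ℝ) (c : ℕ → ℝ → ℝ)
    (hcnn : ∀ i, ∀ t ∈ Set.Icc 0 T, 0 ≤ c i t)
    (hode : ∀ i ∈ Icc 1 n, ∀ t ∈ Set.Icc 0 T,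
      HasDerivAt (c i) (Cn n φ (fun k => c k t) i) t)
    (hμ0 : ∀ t ∈ Set.Icc 0 T, ∑ j ∈ Icc 1 n, c j t ≤ N)
    (hμ1 : ∀ t ∈ Set.Icc 0 T, ∑ j ∈ Icc 1 n, (j : ℝ) * c j t ≤ M) :
    ∀ i : ℕ, 2 ≤ i → i ≤ n - 1 →
      (∫ t in (0 : ℝ)..T, |deriv (c i) t|) ≤ 6 * N * M * T := by
  intro i h2i hin
  have him : i ∈ Icc 1 n := by
    rw [Finset.mem_Icc]; omega
  have hderiv : ∀ t ∈ Set.Icc (0 : ℝ) T, deriv (c i) t = Cn n φ (fun k => c k t) i :=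
    fun t ht => (hode i him t ht).deriv
  have hbound : ∀ t ∈ Set.Icc (0 : ℝ) T, |deriv (c i) t| ≤ 6 * N * M := by
    intro t ht
    rw [hderiv t ht]
    exact cn_bound n i hn h2i hin φ hφnn hφ (fun k => c k t) (fun j => hcnn j t ht)
      N M (hμ0 t ht) (hμ1 t ht)
  have hmeas : Measurable (deriv (c i)) := measurable_deriv _
  have hint : IntervalIntegrable (fun t => |deriv (c i) t|) MeasureTheory.volume 0 T := by
    rw [intervalIntegrable_iff_integrableOn_Ioc_of_le hT.le]
    apply MeasureTheory.Measure.integrableOn_of_bounded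
    · exact (measure_Ioc_lt_top).ne
    · exact (hmeas.abs).aestronglyMeasurable
    · filter_upwards [MeasureTheory.ae_restrict_mem measurableSet_Ioc] with t ht
      rw [Real.norm_eq_abs, abs_abs]
      exact hbound t ⟨ht.1.le, ht.2⟩
  calc (∫ t in (0 : ℝ)..T, |deriv (c i) t|)
      ≤ ∫ t in (0 : ℝ)..T, 6 * N * M :=
        intervalIntegral.integral_mono_on hT.le hint intervalIntegrable_const
          (fun t ht => hbound t ht)
    _ = 6 * N * M * T := by
        rw [intervalIntegral.integral_const, smul_eq_mul]; ring
end

section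
/- Let φ_{i,j} ≤ (1+i+j)^α for some α ∈ [0,1], and let c^n be a nonnegative solution of the truncated non-conservative Safronov-Dubovski system on [0,T] with ∑ c_i^n(t) ≤ μ_0(0) and ∑ j c_j^n(t) ≤ ‖c_0‖. Then for each i with 2 ≤ i ≤ n−1: ∫_0^T |dc_i^n/dt| dt ≤ 4μ_0(0)‖c_0‖T + 4‖c_0‖²T + μ_0(0)²T. -/
open Finset

lemma aux_lin (φ : ℕ → ℕ → ℝ) (α : ℝ) (hα : α ∈ Set.Icc (0 : ℝ) 1)
    (hφ : ∀ i j : ℕ, 1 ≤ i → 1 ≤ j → φ i j ≤ (1 + (i : ℝ) + j) ^ α)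
    (i j : ℕ) (hi : 1 ≤ i) (hj : 1 ≤ j) : φ i j ≤ 1 + (i : ℝ) + j := by
  have h1 : (1 : ℝ) ≤ 1 + (i : ℝ) + j := by
    have : (0:ℝ) ≤ (i:ℝ) := Nat.cast_nonneg i
    have : (0:ℝ) ≤ (j:ℝ) := Nat.cast_nonneg j
    linarith
  calc φ i j ≤ (1 + (i : ℝ) + j) ^ α := hφ i j hi hj
    _ ≤ (1 + (i : ℝ) + j) ^ (1 : ℝ) := Real.rpow_le_rpow_of_exponent_le h1 hα.2
    _ = 1 + (i : ℝ) + j := Real.rpow_one _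

/-- First/second terms: `c_k · ∑_{j≤k} j φ_{k,j} c_j ≤ NM + 2M²`. -/
lemma aux1 (N M : ℝ) (hN : 0 ≤ N) (hM : 0 ≤ M) (n k : ℕ) (hk : 1 ≤ k) (hkn : k ≤ n)
    (φ : ℕ → ℕ → ℝ)
    (hφle : ∀ i j : ℕ, 1 ≤ i → 1 ≤ j → φ i j ≤ 1 + (i : ℝ) + j)
    (d : ℕ → ℝ) (hd : ∀ j, 0 ≤ d j)
    (h0 : ∑ j ∈ Icc 1 n, d j ≤ N) (h1 : ∑ j ∈ Icc 1 n, (j : ℝ) * d j ≤ M) :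
    d k * ∑ j ∈ Icc 1 k, (j : ℝ) * φ k j * d j ≤ N * M + 2 * M ^ 2 := by
  have hMk0 : 0 ≤ ∑ j ∈ Icc 1 k, (j : ℝ) * d j :=
    Finset.sum_nonneg fun j _ => mul_nonneg (Nat.cast_nonneg j) (hd j)
  have hMk : ∑ j ∈ Icc 1 k, (j : ℝ) * d j ≤ M :=
    le_trans (Finset.sum_le_sum_of_subset_of_nonneg
      (Finset.Icc_subset_Icc_right hkn)
      (fun j _ _ => mul_nonneg (Nat.cast_nonneg j) (hd j))) h1
  have hS : ∑ j ∈ Icc 1 k, (j : ℝ) * φ k j * d j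
      ≤ (1 + 2 * (k : ℝ)) * ∑ j ∈ Icc 1 k, (j : ℝ) * d j := by
    rw [Finset.mul_sum]
    apply Finset.sum_le_sum
    intro j hj
    obtain ⟨hj1, hjk⟩ := Finset.mem_Icc.mp hj
    have hφ1 : φ k j ≤ 1 + (k : ℝ) + j := hφle k j hk hj1
    have hjk' : (j : ℝ) ≤ (k : ℝ) := Nat.cast_le.mpr hjk
    have hφ2 : φ k j ≤ 1 + 2 * (k : ℝ) := by linarith
    have hjd : 0 ≤ (j : ℝ) * d j := mul_nonneg (Nat.cast_nonneg j) (hd j)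
    calc (j : ℝ) * φ k j * d j = ((j : ℝ) * d j) * φ k j := by ring
      _ ≤ ((j : ℝ) * d j) * (1 + 2 * (k : ℝ)) := mul_le_mul_of_nonneg_left hφ2 hjd
      _ = (1 + 2 * (k : ℝ)) * ((j : ℝ) * d j) := by ring
  have hdk : d k ≤ N :=
    le_trans (Finset.single_le_sum (fun j _ => hd j) (Finset.mem_Icc.mpr ⟨hk, hkn⟩)) h0
  have hkdk : (k : ℝ) * d k ≤ M :=
    le_trans (Finset.single_le_sum
      (fun j _ => mul_nonneg (Nat.cast_nonneg j) (hd j))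
      (Finset.mem_Icc.mpr ⟨hk, hkn⟩)) h1
  have h3 : d k * ∑ j ∈ Icc 1 k, (j : ℝ) * φ k j * d j
      ≤ d k * ((1 + 2 * (k : ℝ)) * ∑ j ∈ Icc 1 k, (j : ℝ) * d j) :=
    mul_le_mul_of_nonneg_left hS (hd k)
  have h4 : d k * (∑ j ∈ Icc 1 k, (j : ℝ) * d j) ≤ N * M :=
    mul_le_mul hdk hMk hMk0 hN
  have h5 : ((k : ℝ) * d k) * (∑ j ∈ Icc 1 k, (j : ℝ) * d j) ≤ M * M :=
    mul_le_mul hkdk hMk hMk0 hM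
  nlinarith [h3, h4, h5]

/-- Third term: `c_i · ∑_{j=i}^n φ_{i,j} c_j ≤ N² + 2NM`. -/
lemma aux2 (N M : ℝ) (hN : 0 ≤ N) (hM : 0 ≤ M) (n i : ℕ) (hi : 1 ≤ i) (hin : i ≤ n)
    (φ : ℕ → ℕ → ℝ)
    (hφle : ∀ i j : ℕ, 1 ≤ i → 1 ≤ j → φ i j ≤ 1 + (i : ℝ) + j)
    (d : ℕ → ℝ) (hd : ∀ j, 0 ≤ d j)
    (h0 : ∑ j ∈ Icc 1 n, d j ≤ N) (h1 : ∑ j ∈ Icc 1 n, (j : ℝ) * d j ≤ M) :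
    d i * ∑ j ∈ Icc i n, φ i j * d j ≤ N ^ 2 + 2 * N * M := by
  have hsub : Icc i n ⊆ Icc 1 n := Finset.Icc_subset_Icc_left hi
  have hN0 : ∑ j ∈ Icc i n, d j ≤ N :=
    le_trans (Finset.sum_le_sum_of_subset_of_nonneg hsub (fun j _ _ => hd j)) h0
  have hM1 : ∑ j ∈ Icc i n, (j : ℝ) * d j ≤ M :=
    le_trans (Finset.sum_le_sum_of_subset_of_nonneg hsub
      (fun j _ _ => mul_nonneg (Nat.cast_nonneg j) (hd j))) h1
  have hS : ∑ j ∈ Icc i n, φ i j * d j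
      ≤ (∑ j ∈ Icc i n, d j) + 2 * ∑ j ∈ Icc i n, (j : ℝ) * d j := by
    rw [Finset.mul_sum, ← Finset.sum_add_distrib]
    apply Finset.sum_le_sum
    intro j hj
    obtain ⟨hij, hjn⟩ := Finset.mem_Icc.mp hj
    have hj1 : 1 ≤ j := le_trans hi hij
    have hφ1 : φ i j ≤ 1 + (i : ℝ) + j := hφle i j hi hj1
    have hij' : (i : ℝ) ≤ (j : ℝ) := Nat.cast_le.mpr hij
    have hφ2 : φ i j ≤ 1 + 2 * (j : ℝ) := by linarith
    nlinarith [hd j, mul_le_mul_of_nonneg_right hφ2 (hd j)]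
  have hdi : d i ≤ N :=
    le_trans (Finset.single_le_sum (fun j _ => hd j) (Finset.mem_Icc.mpr ⟨hi, hin⟩)) h0
  have hS0 : 0 ≤ ∑ j ∈ Icc i n, d j := Finset.sum_nonneg fun j _ => hd j
  have hSM0 : 0 ≤ ∑ j ∈ Icc i n, (j : ℝ) * d j :=
    Finset.sum_nonneg fun j _ => mul_nonneg (Nat.cast_nonneg j) (hd j)
  have h3 : d i * ∑ j ∈ Icc i n, φ i j * d j
      ≤ d i * ((∑ j ∈ Icc i n, d j) + 2 * ∑ j ∈ Icc i n, (j : ℝ) * d j) :=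
    mul_le_mul_of_nonneg_left hS (hd i)
  have h4 : d i * (∑ j ∈ Icc i n, d j) ≤ N * N := mul_le_mul hdi hN0 hS0 hN
  have h5 : d i * (∑ j ∈ Icc i n, (j : ℝ) * d j) ≤ N * M := mul_le_mul hdi hM1 hSM0 hN
  nlinarith [h3, h4, h5]

/-- Lemma 2.3, kernel `φ_{i,j} ≤ (1+i+j)^α`: total-variation bound
    total variation bound for `2 ≤ i ≤ n−1`. -/
theorem stmt7 (n : ℕ) (hn : 2 ≤ n) (T : ℝ) (hT : 0 < T) (α : ℝ)
    (hα : α ∈ Set.Icc (0 : ℝ) 1)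
    (φ : ℕ → ℕ → ℝ) (hφnn : ∀ i j, 0 ≤ φ i j) (hφsym : ∀ i j, φ i j = φ j i)
    (hφ : ∀ i j : ℕ, 1 ≤ i → 1 ≤ j → φ i j ≤ (1 + (i : ℝ) + j) ^ α)
    (N M : ℝ) (c : ℕ → ℝ → ℝ)
    (hcnn : ∀ i, ∀ t ∈ Set.Icc 0 T, 0 ≤ c i t)
    (hode : ∀ i ∈ Icc 1 n, ∀ t ∈ Set.Icc 0 T,
      HasDerivAt (c i) (Cn n φ (fun k => c k t) i) t)
    (hμ0 : ∀ t ∈ Set.Icc 0 T, ∑ j ∈ Icc 1 n, c j t ≤ N)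
    (hμ1 : ∀ t ∈ Set.Icc 0 T, ∑ j ∈ Icc 1 n, (j : ℝ) * c j t ≤ M) :
    ∀ i : ℕ, 2 ≤ i → i ≤ n - 1 →
      (∫ t in (0 : ℝ)..T, |deriv (c i) t|) ≤ 4 * N * M * T + 4 * M ^ 2 * T + N ^ 2 * T := by
  intro i hi2 hin1
  have hφle : ∀ i j : ℕ, 1 ≤ i → 1 ≤ j → φ i j ≤ 1 + (i : ℝ) + j :=
    aux_lin φ α hα hφ
  have ht0 : (0 : ℝ) ∈ Set.Icc 0 T := ⟨le_refl 0, hT.le⟩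
  have hN : 0 ≤ N :=
    le_trans (Finset.sum_nonneg fun j _ => hcnn j 0 ht0) (hμ0 0 ht0)
  have hM : 0 ≤ M :=
    le_trans (Finset.sum_nonneg fun j _ =>
      mul_nonneg (Nat.cast_nonneg j) (hcnn j 0 ht0)) (hμ1 0 ht0)
  have hilt : i < n := lt_of_le_of_lt hin1 (Nat.sub_lt (by omega) one_pos)
  have hi1 : 1 ≤ i := by omega
  have hiIcc : i ∈ Icc 1 n := Finset.mem_Icc.mpr ⟨hi1, hilt.le⟩
  have hbound : ∀ t ∈ Set.Icc (0 : ℝ) T,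
      |deriv (c i) t| ≤ 4 * N * M + 4 * M ^ 2 + N ^ 2 := by
    intro t ht
    have hd := (hode i hiIcc t ht).deriv
    rw [hd]
    have hne1 : i ≠ 1 := by omega
    have hnen : i ≠ n := by omega
    rw [Cn, if_neg hne1, if_neg hnen]
    set d : ℕ → ℝ := fun k => c k t with hdref
    have hdnn : ∀ j, 0 ≤ d j := fun j => hcnn j t ht
    have h0 : ∑ j ∈ Icc 1 n, d j ≤ N := hμ0 t ht
    have h1 : ∑ j ∈ Icc 1 n, (j : ℝ) * d j ≤ M := hμ1 t ht
    have hA : d (i - 1) * ∑ j ∈ Icc 1 (i - 1), (j : ℝ) * φ (i - 1) j * d j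
        ≤ N * M + 2 * M ^ 2 :=
      aux1 N M hN hM n (i - 1) (by omega) (by omega) φ hφle d hdnn h0 h1
    have hB : d i * ∑ j ∈ Icc 1 i, (j : ℝ) * φ i j * d j ≤ N * M + 2 * M ^ 2 :=
      aux1 N M hN hM n i hi1 hilt.le φ hφle d hdnn h0 h1
    have hD : d i * ∑ j ∈ Icc i n, φ i j * d j ≤ N ^ 2 + 2 * N * M :=
      aux2 N M hN hM n i hi1 hilt.le φ hφle d hdnn h0 h1
    have hA0 : 0 ≤ d (i - 1) * ∑ j ∈ Icc 1 (i - 1), (j : ℝ) * φ (i - 1) j * d j :=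
      mul_nonneg (hdnn _) (Finset.sum_nonneg fun j _ =>
        mul_nonneg (mul_nonneg (Nat.cast_nonneg j) (hφnn _ j)) (hdnn j))
    have hB0 : 0 ≤ d i * ∑ j ∈ Icc 1 i, (j : ℝ) * φ i j * d j :=
      mul_nonneg (hdnn _) (Finset.sum_nonneg fun j _ =>
        mul_nonneg (mul_nonneg (Nat.cast_nonneg j) (hφnn _ j)) (hdnn j))
    have hD0 : 0 ≤ d i * ∑ j ∈ Icc i n, φ i j * d j :=
      mul_nonneg (hdnn _) (Finset.sum_nonneg fun j _ =>
        mul_nonneg (hφnn _ j) (hdnn j))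
    have hNM : 0 ≤ N * M := mul_nonneg hN hM
    have hM2 : 0 ≤ M ^ 2 := sq_nonneg M
    have hN2 : 0 ≤ N ^ 2 := sq_nonneg N
    rw [abs_le]
    constructor
    · linarith
    · linarith
  by_cases hint : IntervalIntegrable (fun t => |deriv (c i) t|) MeasureTheory.volume 0 T
  · calc (∫ t in (0 : ℝ)..T, |deriv (c i) t|)
        ≤ ∫ _ in (0 : ℝ)..T, (4 * N * M + 4 * M ^ 2 + N ^ 2) :=
          intervalIntegral.integral_mono_on hT.le hint intervalIntegrable_const hbound
      _ = (T - 0) • (4 * N * M + 4 * M ^ 2 + N ^ 2) := intervalIntegral.integral_const _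
      _ = 4 * N * M * T + 4 * M ^ 2 * T + N ^ 2 * T := by
          rw [smul_eq_mul]; ring
  · rw [intervalIntegral.integral_undef hint]
    have hNM : 0 ≤ N * M := mul_nonneg hN hM
    nlinarith [sq_nonneg M, sq_nonneg N, hT.le, mul_nonneg hNM hT.le,
      mul_nonneg (sq_nonneg M) hT.le, mul_nonneg (sq_nonneg N) hT.le]
end

section
/- Let (c_i^0) be a nonnegative sequence with ∑_{i=1}^{∞} i c_i^0 < ∞. Then there exists a convex function γ : [0,∞) → [0,∞) with γ(0) = 0, γ' concave and nonnegative, and γ(r)/r → ∞ as r → ∞, such that ∑_{i=1}^{∞} γ(i) c_i^0 < ∞. -/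
/-!
The weight is the primitive `γ(x) = ∫₀ˣ g` of a sum of ramps `g(x) = ∑ₖ min(x⁺ / nₖ, 1)`.
Each ramp is concave and nondecreasing, so `g` is too and `γ` is convex and `C¹`; the `k`-th
ramp equals `1` beyond `nₖ`, so `g → ∞`, which makes `γ` superlinear.
By dominated convergence `∑ᵢ i cᵢ min(i / n, 1) → 0` as `n → ∞`, so the scales can be chosen
with `∑ᵢ i cᵢ min(i / nₖ, 1) ≤ 2⁻ᵏ` (and `nₖ ≥ 2ᵏ`, so that `g` is finite). Since `γ(i) ≤ i g(i)`,
exchanging the two sums gives `∑ᵢ γ(i) cᵢ ≤ ∑ₖ 2⁻ᵏ < ∞`.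
-/

open Filter Set Topology MeasureTheory

noncomputable def ramp (n x : ℝ) : ℝ := min (max x 0 / n) 1

section Ramp

variable {n : ℝ}

lemma ramp_nonneg (hn : 0 ≤ n) (x : ℝ) : 0 ≤ ramp n x :=
  le_min (div_nonneg (le_max_right _ _) hn) zero_le_one

lemma ramp_le_div (n x : ℝ) : ramp n x ≤ max x 0 / n := min_le_left _ _

lemma ramp_eq_one (hn : 0 < n) {x : ℝ} (hx : n ≤ x) : ramp n x = 1 :=
  min_eq_right ((one_le_div hn).2 (hx.trans (le_max_left _ _)))

lemma monotone_ramp (hn : 0 ≤ n) : Monotone (ramp n) := fun _ _ hxy =>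
  min_le_min_right _ (div_le_div_of_nonneg_right (max_le_max_right _ hxy) hn)

lemma continuous_ramp (n : ℝ) : Continuous (ramp n) := by
  unfold ramp
  fun_prop

lemma concaveOn_ramp (hn : 0 ≤ n) : ConcaveOn ℝ (Ici 0) (ramp n) := by
  have hlin : ConcaveOn ℝ (Ici 0) fun x : ℝ => n⁻¹ • x :=
    (concaveOn_id (convex_Ici 0)).smul (inv_nonneg.2 hn)
  refine (hlin.inf (concaveOn_const 1 (convex_Ici 0))).congr fun x hx => ?_
  simp [ramp, max_eq_left (mem_Ici.1 hx), div_eq_inv_mul]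

lemma tendsto_ramp_atTop (x : ℝ) : Tendsto (fun n => ramp n x) atTop (𝓝 0) :=
  tendsto_of_tendsto_of_tendsto_of_le_of_le' tendsto_const_nhds
    (tendsto_const_nhds.div_atTop tendsto_id)
    ((eventually_ge_atTop 0).mono fun _ hn => ramp_nonneg hn x)
    (Eventually.of_forall fun n => ramp_le_div n x)

end Ramp

theorem ConcaveOn.tsum {ι E : Type*} [AddCommGroup E] [Module ℝ E] {s : Set E}
    {f : ι → E → ℝ} (hf : ∀ k, ConcaveOn ℝ s (f k)) (hs : Convex ℝ s)
    (hsum : ∀ x ∈ s, Summable fun k => f k x) : ConcaveOn ℝ s fun x => ∑' k, f k x := by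
  refine ⟨hs, fun x hx y hy a b ha hb hab => ?_⟩
  have hax := (hsum x hx).mul_left a
  have hby := (hsum y hy).mul_left b
  calc a • ∑' k, f k x + b • ∑' k, f k y = ∑' k, (a * f k x + b * f k y) := by
        rw [smul_eq_mul, smul_eq_mul, ← tsum_mul_left, ← tsum_mul_left, hax.tsum_add hby]
    _ ≤ ∑' k, f k (a • x + b • y) :=
        (hax.add hby).tsum_le_tsum (fun k => (hf k).2 hx hy ha hb hab)
          (hsum _ (hs hx hy ha hb hab))

noncomputable def rampSum (n : ℕ → ℝ) (x : ℝ) : ℝ := ∑' k, ramp (n k) x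

section RampSum

variable {n : ℕ → ℝ}

lemma pos_of_two_pow_le (hn : ∀ k, (2 : ℝ) ^ k ≤ n k) (k : ℕ) : 0 < n k :=
  (pow_pos two_pos k).trans_le (hn k)

lemma ramp_le_geometric (hn : ∀ k, (2 : ℝ) ^ k ≤ n k) (k : ℕ) (x : ℝ) :
    ramp (n k) x ≤ max x 0 * (1 / 2) ^ k :=
  calc ramp (n k) x ≤ max x 0 / n k := ramp_le_div _ _
    _ ≤ max x 0 / 2 ^ k := div_le_div_of_nonneg_left (le_max_right _ _) (by positivity) (hn k)
    _ = max x 0 * (1 / 2) ^ k := by rw [one_div, inv_pow, div_eq_mul_inv]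

lemma summable_ramp (hn : ∀ k, (2 : ℝ) ^ k ≤ n k) (x : ℝ) : Summable fun k => ramp (n k) x :=
  .of_nonneg_of_le (fun k => ramp_nonneg (pos_of_two_pow_le hn k).le x)
    (ramp_le_geometric hn · x) (summable_geometric_two.mul_left _)

lemma rampSum_nonneg (hn : ∀ k, (2 : ℝ) ^ k ≤ n k) (x : ℝ) : 0 ≤ rampSum n x :=
  tsum_nonneg fun k => ramp_nonneg (pos_of_two_pow_le hn k).le x

lemma monotone_rampSum (hn : ∀ k, (2 : ℝ) ^ k ≤ n k) : Monotone (rampSum n) := fun x y hxy =>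
  (summable_ramp hn x).tsum_le_tsum (fun k => monotone_ramp (pos_of_two_pow_le hn k).le hxy)
    (summable_ramp hn y)

lemma concaveOn_rampSum (hn : ∀ k, (2 : ℝ) ^ k ≤ n k) : ConcaveOn ℝ (Ici 0) (rampSum n) :=
  ConcaveOn.tsum (fun k => concaveOn_ramp (pos_of_two_pow_le hn k).le) (convex_Ici 0)
    fun x _ => summable_ramp hn x

lemma continuous_rampSum (hn : ∀ k, (2 : ℝ) ^ k ≤ n k) : Continuous (rampSum n) := by
  refine continuous_iff_continuousAt.2 fun x => ?_
  have hon : ContinuousOn (rampSum n) (Iio (x + 1)) := by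
    refine continuousOn_tsum (fun k => (continuous_ramp _).continuousOn)
      (summable_geometric_two.mul_left (max (x + 1) 0)) fun k y hy => ?_
    rw [Real.norm_of_nonneg (ramp_nonneg (pos_of_two_pow_le hn k).le y)]
    exact (ramp_le_geometric hn k y).trans (by gcongr; exact le_of_lt hy)
  exact hon.continuousAt (Iio_mem_nhds (lt_add_one x))

lemma tendsto_rampSum_atTop (hn : ∀ k, (2 : ℝ) ^ k ≤ n k) : Tendsto (rampSum n) atTop atTop := by
  refine tendsto_atTop.2 fun b => ?_
  obtain ⟨K, hK⟩ := exists_nat_ge b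
  filter_upwards [(Finset.range K).eventually_all.2 fun k _ => eventually_ge_atTop (n k)]
    with x hx
  calc b ≤ ∑ k ∈ Finset.range K, ramp (n k) x := by
        rw [Finset.sum_congr rfl fun k hk => ramp_eq_one (pos_of_two_pow_le hn k) (hx k hk)]
        simpa using hK
    _ ≤ rampSum n x :=
        (summable_ramp hn x).sum_le_tsum _ fun k _ => ramp_nonneg (pos_of_two_pow_le hn k).le x

lemma summable_mul_rampSum {ι : Type*} (hn : ∀ k, (2 : ℝ) ^ k ≤ n k) (p : ι → ℝ) {h : ι → ℝ}
    (h0 : ∀ i, 0 ≤ h i) (hs : Summable h)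
    (hscale : ∀ k, ∑' i, h i * ramp (n k) (p i) ≤ (1 / 2) ^ k) :
    Summable fun i => h i * rampSum n (p i) := by
  set F : ℕ × ι → ℝ := fun q => h q.2 * ramp (n q.1) (p q.2)
  have hF0 : 0 ≤ F := fun q => mul_nonneg (h0 _) (ramp_nonneg (pos_of_two_pow_le hn _).le _)
  have hrow (k : ℕ) : Summable fun i => F (k, i) :=
    hs.of_nonneg_of_le (fun i => hF0 (k, i)) fun i =>
      mul_le_of_le_one_right (h0 i) (min_le_right _ _)
  have hF : Summable F :=
    (summable_prod_of_nonneg hF0).2 ⟨hrow, summable_geometric_two.of_nonneg_of_le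
      (fun k => tsum_nonneg fun i => hF0 (k, i)) hscale⟩
  have hcol := ((summable_prod_of_nonneg fun q => hF0 q.swap).1 hF.prod_symm).2
  simpa only [F, Prod.snd_swap, Prod.fst_swap, rampSum, tsum_mul_left] using hcol

end RampSum

section Weight

variable {ι : Type*} (p : ι → ℝ) {h : ι → ℝ}

lemma tendsto_tsum_mul_ramp (h0 : ∀ i, 0 ≤ h i) (hs : Summable h) :
    Tendsto (fun n => ∑' i, h i * ramp n (p i)) atTop (𝓝 0) := by
  have hlim := tendsto_tsum_of_dominated_convergence (𝓕 := atTop)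
    (f := fun n i => h i * ramp n (p i)) hs
    (fun i => by simpa using (tendsto_ramp_atTop (p i)).const_mul (h i))
    ((eventually_ge_atTop 0).mono fun n hn i => by
      rw [Real.norm_of_nonneg (mul_nonneg (h0 i) (ramp_nonneg hn _))]
      exact mul_le_of_le_one_right (h0 i) (min_le_right _ _))
  simpa using hlim

lemma exists_ramp_scales (h0 : ∀ i, 0 ≤ h i) (hs : Summable h) :
    ∃ n : ℕ → ℝ, (∀ k, (2 : ℝ) ^ k ≤ n k) ∧ ∀ k, ∑' i, h i * ramp (n k) (p i) ≤ (1 / 2) ^ k := by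
  have hk (k : ℕ) : ∃ n : ℝ, (2 : ℝ) ^ k ≤ n ∧ ∑' i, h i * ramp n (p i) ≤ (1 / 2) ^ k :=
    ((eventually_ge_atTop _).and ((tendsto_tsum_mul_ramp p h0 hs).eventually
      (eventually_le_nhds (by positivity)))).exists
  choose n hn hscale using hk
  exact ⟨n, hn, hscale⟩

theorem exists_concave_tendsto_atTop_summable_mul (h0 : ∀ i, 0 ≤ h i) (hs : Summable h) :
    ∃ g : ℝ → ℝ, Continuous g ∧ Monotone g ∧ (∀ x, 0 ≤ g x) ∧ ConcaveOn ℝ (Ici 0) g ∧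
      Tendsto g atTop atTop ∧ Summable fun i => h i * g (p i) := by
  obtain ⟨n, hn, hscale⟩ := exists_ramp_scales p h0 hs
  exact ⟨rampSum n, continuous_rampSum hn, monotone_rampSum hn, rampSum_nonneg hn,
    concaveOn_rampSum hn, tendsto_rampSum_atTop hn, summable_mul_rampSum hn p h0 hs hscale⟩

end Weight

section Primitive

variable {g : ℝ → ℝ}

lemma deriv_primitive (hg : Continuous g) : deriv (fun x => ∫ t in (0 : ℝ)..x, g t) = g :=
  funext (hg.deriv_integral g 0)

lemma contDiff_primitive (hg : Continuous g) : ContDiff ℝ 1 fun x => ∫ t in (0 : ℝ)..x, g t :=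
  contDiff_one_iff_deriv.2
    ⟨fun x => (hg.integral_hasStrictDerivAt 0 x).hasDerivAt.differentiableAt,
      by rw [deriv_primitive hg]; exact hg⟩

lemma convexOn_primitive (hg : Continuous g) (hmono : Monotone g) :
    ConvexOn ℝ univ fun x => ∫ t in (0 : ℝ)..x, g t :=
  Monotone.convexOn_univ_of_deriv (contDiff_primitive hg).differentiable_one
    (by rw [deriv_primitive hg]; exact hmono)

lemma primitive_nonneg (hg0 : ∀ x, 0 ≤ g x) {x : ℝ} (hx : 0 ≤ x) : 0 ≤ ∫ t in (0 : ℝ)..x, g t :=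
  intervalIntegral.integral_nonneg hx fun t _ => hg0 t

lemma primitive_le_mul (hg : Continuous g) (hmono : Monotone g) {x : ℝ} (hx : 0 ≤ x) :
    ∫ t in (0 : ℝ)..x, g t ≤ x * g x := by
  simpa using intervalIntegral.integral_mono_on hx (hg.intervalIntegrable (μ := volume) 0 x)
    intervalIntegrable_const fun t ht => hmono ht.2

lemma half_mul_le_primitive (hg : Continuous g) (hmono : Monotone g) (hg0 : ∀ x, 0 ≤ g x)
    {r : ℝ} (hr : 0 ≤ r) : r / 2 * g (r / 2) ≤ ∫ t in (0 : ℝ)..r, g t := by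
  have hint (a b : ℝ) : IntervalIntegrable g volume a b := hg.intervalIntegrable a b
  have hupper : r / 2 * g (r / 2) ≤ ∫ t in (r / 2)..r, g t := by
    simpa [show r - r / 2 = r / 2 by ring] using intervalIntegral.integral_mono_on
      (show r / 2 ≤ r by linarith) intervalIntegrable_const (hint _ _) fun t ht => hmono ht.1
  rw [← intervalIntegral.integral_add_adjacent_intervals (hint 0 (r / 2)) (hint _ r)]
  linarith [primitive_nonneg hg0 (by positivity : 0 ≤ r / 2)]

lemma tendsto_primitive_div_atTop (hg : Continuous g) (hmono : Monotone g) (hg0 : ∀ x, 0 ≤ g x)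
    (htop : Tendsto g atTop atTop) :
    Tendsto (fun r => (∫ t in (0 : ℝ)..r, g t) / r) atTop atTop := by
  refine tendsto_atTop_mono' atTop ?_
    ((htop.comp (tendsto_id.atTop_div_const two_pos)).atTop_div_const two_pos)
  filter_upwards [eventually_gt_atTop 0] with r hr
  rw [Function.comp_apply, id, le_div_iff₀ hr]
  linarith [half_mul_le_primitive hg hmono hg0 hr.le]

end Primitive

/-- Refined De la Vallée-Poussin theorem applied to data with finite mass:
    there is a superlinear convex weight γ in the class G still summable
    against the data. -/
theorem stmt10 (c0 : ℕ → ℝ) (hc0 : ∀ i, 0 ≤ c0 i)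
    (hmass : Summable (fun i : ℕ => (i : ℝ) * c0 i)) :
    ∃ γ : ℝ → ℝ,
      ContDiff ℝ 1 γ ∧
      (∀ x : ℝ, 0 ≤ x → 0 ≤ γ x) ∧
      γ 0 = 0 ∧
      ConvexOn ℝ (Set.Ici 0) γ ∧
      ConcaveOn ℝ (Set.Ici 0) (deriv γ) ∧
      (∀ x : ℝ, 0 ≤ x → 0 ≤ deriv γ x) ∧
      Tendsto (fun r : ℝ => γ r / r) atTop atTop ∧
      Summable (fun i : ℕ => γ i * c0 i) := by
  obtain ⟨g, hg, hmono, hg0, hconc, htop, hsum⟩ := exists_concave_tendsto_atTop_summable_mul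
    (fun i : ℕ => (i : ℝ)) (fun i => mul_nonneg i.cast_nonneg (hc0 i)) hmass
  refine ⟨fun x => ∫ t in (0 : ℝ)..x, g t, contDiff_primitive hg,
    fun x hx => primitive_nonneg hg0 hx, intervalIntegral.integral_same,
    (convexOn_primitive hg hmono).subset (subset_univ _) (convex_Ici 0), ?_, ?_,
    tendsto_primitive_div_atTop hg hmono hg0 htop, ?_⟩
  · rwa [deriv_primitive hg]
  · rw [deriv_primitive hg]
    exact fun x _ => hg0 x
  · refine hsum.of_nonneg_of_le
      (fun i => mul_nonneg (primitive_nonneg hg0 i.cast_nonneg) (hc0 i)) fun i => ?_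
    calc (∫ t in (0 : ℝ)..i, g t) * c0 i ≤ i * g i * c0 i :=
          mul_le_mul_of_nonneg_right (primitive_le_mul hg hmono i.cast_nonneg) (hc0 i)
      _ = i * c0 i * g i := by ring
end
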